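/- arXiv:math/0109108 — 3 statements merged into one kernel-verified Lean document; each statement's English description precedes it below -/
import Mathlib

section
/- For every n ≥ 2, ζ(n) = (2^n/(2^n - 1)) ∫_{(0,1)^n} 1/(1 - x₁²x₂²···x_n²) dx. -/
/-!
On the open unit cube, `(1 - ∏ xᵢ²)⁻¹ = ∑ₖ ∏ xᵢ^(2k)` is a geometric series with nonnegative
terms, and `∫ ∏ xᵢ^(2k) = (2k+1)⁻ⁿ`, so the integral is the odd part `∑ₖ (2k+1)⁻ⁿ` of `ζ(n)`.
Removing the even terms `2⁻ⁿ ζ(n)` shows that this odd part is `(1 - 2⁻ⁿ) ζ(n)`.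
-/

open MeasureTheory Set

lemma setIntegral_univ_pi_prod_eq_pow {ι 𝕜 E : Type*} [Fintype ι] [RCLike 𝕜] [MeasureSpace E]
    [SigmaFinite (volume : Measure E)] (f : E → 𝕜) (s : Set E) :
    ∫ x in univ.pi fun _ : ι => s, ∏ i, f (x i) = (∫ x in s, f x) ^ Fintype.card ι := by
  rw [volume_pi, Measure.restrict_pi_pi, integral_fintype_prod_eq_pow]

lemma integral_Ioo_zero_one_pow (m : ℕ) : ∫ x in Ioo (0 : ℝ) 1, x ^ m = ((m : ℝ) + 1)⁻¹ := by
  rw [← integral_Ioc_eq_integral_Ioo, ← intervalIntegral.integral_of_le zero_le_one,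
    integral_pow]
  simp

lemma tsum_inv_odd_pow {n : ℕ} (hn : 1 < n) :
    ∑' k : ℕ, ((2 * k + 1 : ℝ) ^ n)⁻¹ = (1 - (2 ^ n)⁻¹) * ∑' m : ℕ, ((m : ℝ) ^ n)⁻¹ := by
  have hS : Summable fun m : ℕ => ((m : ℝ) ^ n)⁻¹ := Real.summable_nat_pow_inv.mpr hn
  have hsplit := tsum_even_add_odd (f := fun m : ℕ => ((m : ℝ) ^ n)⁻¹)
    (hS.comp_injective (mul_right_injective₀ two_ne_zero))
    (hS.comp_injective fun a b h => by omega)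
  have heven_eq : ∑' k : ℕ, ((2 * k : ℝ) ^ n)⁻¹ = (2 ^ n)⁻¹ * ∑' m : ℕ, ((m : ℝ) ^ n)⁻¹ := by
    simp only [mul_pow, mul_inv, tsum_mul_left]
  push_cast at hsplit
  linear_combination hsplit - heven_eq

lemma summable_inv_odd_pow {n : ℕ} (hn : 1 < n) :
    Summable fun k : ℕ => ((2 * k + 1 : ℝ) ^ n)⁻¹ := by
  simpa [Function.comp_def] using (Real.summable_nat_pow_inv.mpr hn).comp_injective
    (i := fun k : ℕ => 2 * k + 1) fun a b h => by simpa using h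

lemma hasSum_prod_pow_two_mul {ι : Type*} [Fintype ι] [Nonempty ι] {x : ι → ℝ}
    (hx : x ∈ univ.pi fun _ : ι => Ioo (0 : ℝ) 1) :
    HasSum (fun k : ℕ => ∏ i, x i ^ (2 * k)) (1 - ∏ i, x i ^ 2)⁻¹ := by
  have hx' (i : ι) : x i ∈ Ioo (0 : ℝ) 1 := hx i (mem_univ i)
  have hlt : ∏ i, x i ^ 2 < 1 := by
    simpa using Finset.prod_lt_prod_of_nonempty (g := fun _ => (1 : ℝ))
      (fun i _ => pow_pos (hx' i).1 2)
      (fun i _ => pow_lt_one₀ (hx' i).1.le (hx' i).2 two_ne_zero) Finset.univ_nonempty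
  convert hasSum_geometric_of_lt_one (by positivity) hlt using 2 with k
  rw [← Finset.prod_pow]
  simp only [pow_mul]

lemma integral_cube_inv_one_sub_prod_sq {ι : Type*} [Fintype ι] (hι : 1 < Fintype.card ι) :
    ∫ x in univ.pi fun _ : ι => Ioo (0 : ℝ) 1, (1 - ∏ i, x i ^ 2)⁻¹ =
      ∑' k : ℕ, ((2 * k + 1 : ℝ) ^ Fintype.card ι)⁻¹ := by
  have : Nonempty ι := Fintype.card_pos_iff.mp (by omega)
  set cube := univ.pi fun _ : ι => Ioo (0 : ℝ) 1
  have hterm (k : ℕ) : ∫ x in cube, ∏ i, x i ^ (2 * k) = ((2 * k + 1 : ℝ) ^ Fintype.card ι)⁻¹ := by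
    rw [setIntegral_univ_pi_prod_eq_pow (fun t : ℝ => t ^ (2 * k)), integral_Ioo_zero_one_pow,
      inv_pow]
    push_cast
    rfl
  have hterm_int (k : ℕ) : IntegrableOn (fun x : ι → ℝ => ∏ i, x i ^ (2 * k)) cube :=
    .of_integral_ne_zero (by rw [hterm]; positivity)
  have hterm_norm : Summable fun k : ℕ => ∫ x in cube, ‖∏ i, x i ^ (2 * k)‖ := by
    simp_rw [Real.norm_of_nonneg (Finset.prod_nonneg fun _ _ => (even_two_mul _).pow_nonneg _),
      hterm]
    exact summable_inv_odd_pow hι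
  calc ∫ x in cube, (1 - ∏ i, x i ^ 2)⁻¹
      = ∫ x in cube, ∑' k : ℕ, ∏ i, x i ^ (2 * k) :=
        setIntegral_congr_fun (.univ_pi fun _ => measurableSet_Ioo)
          fun x hx => (hasSum_prod_pow_two_mul hx).tsum_eq.symm
    _ = ∑' k : ℕ, ∫ x in cube, ∏ i, x i ^ (2 * k) :=
        (integral_tsum_of_summable_integral_norm hterm_int hterm_norm).symm
    _ = ∑' k : ℕ, ((2 * k + 1 : ℝ) ^ Fintype.card ι)⁻¹ := tsum_congr hterm

/-- For `n ≥ 2`, `ζ(n) = (2^n/(2^n - 1)) ∫_{(0,1)^n} 1/(1 - x₁²⋯x_n²) dx`. -/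
theorem zeta_eq_integral_cube (n : ℕ) (hn : 2 ≤ n) :
    riemannZeta n =
      ((2 ^ n / (2 ^ n - 1) *
        ∫ x in Set.pi Set.univ fun _ : Fin n => Set.Ioo (0 : ℝ) 1,
          (1 - ∏ i, x i ^ 2)⁻¹ : ℝ) : ℂ) := by
  have hn₁ : 1 < n := hn
  have h2n : (1 : ℝ) < 2 ^ n := one_lt_pow₀ one_lt_two (by omega)
  have hfactor : (2 : ℝ) ^ n / (2 ^ n - 1) * (1 - (2 ^ n)⁻¹) = 1 := by
    field_simp [(sub_pos.2 h2n).ne']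
  rw [zeta_nat_eq_tsum_of_gt_one hn₁, integral_cube_inv_one_sub_prod_sq (by simpa using hn₁),
    Fintype.card_fin, tsum_inv_odd_pow hn₁, ← mul_assoc, hfactor, one_mul, Complex.ofReal_tsum]
  simp [one_div]
end

section
/- For every positive integer n, ζ(2n) = (π^{2n}/(4^n - 1)) ∫_{(0,1)^n} (x₁∧x₂)(x₂∧x₃)···(x_{n-1}∧x_n)(x_n∧x₁) dm(x̄), where a∧b = min(a,b). -/
/-!
`min x y` is the Green's function of `-u''` on `(0, 1)` with `u 0 = 0`, `u' 1 = 0`. Its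
eigenfunctions `φ_k x = √2 sin (ω_k x)`, `ω_k = (2k+1)π/2`, are orthonormal in `L²(0, 1)` with
eigenvalues `ω_k⁻²`, and the expansion `min x y = ∑ ω_k⁻² φ_k x φ_k y` is the odd part of the
Fourier series of the Bernoulli polynomial `B₂`. Expanding the cyclic product and integrating
term by term, the orthonormality kills every multi-index except the constant ones, so the integral
is the trace
`∑ ω_k^(-2n) = (2/π)^(2n) ∑ (2k+1)^(-2n) = (2/π)^(2n) (1 - 4^(-n)) ζ(2n)`.
-/

open MeasureTheory Real Set

theorem HasSum.odd_of_even {G : Type*} [AddCommGroup G] [TopologicalSpace G]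
    [IsTopologicalAddGroup G] {f : ℕ → G} {a b : G} (hf : HasSum f a)
    (he : HasSum (fun k ↦ f (2 * k)) b) : HasSum (fun k ↦ f (2 * k + 1)) (a - b) := by
  have h2 := mul_right_injective₀ (two_ne_zero' ℕ)
  have hcompl : (range (2 * ·))ᶜ = range (fun k ↦ 2 * k + 1) := by
    simpa [Function.comp_def] using Nat.isCompl_even_odd.compl_eq
  have := (h2.hasSum_range_iff.2 he).hasSum_iff_compl.1 hf
  rw [hcompl] at this
  exact ((add_left_injective 1).comp h2).hasSum_range_iff.1 this

theorem HasSum.fin_prod {𝕜 β : Type*} [RCLike 𝕜] {n : ℕ} {f : Fin n → β → 𝕜} {S : Fin n → 𝕜}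
    (hf : ∀ i, HasSum (f i) (S i)) :
    HasSum (fun κ : Fin n → β ↦ ∏ i, f i (κ i)) (∏ i, S i) := by
  induction n with
  | zero => simp
  | succ n ih =>
    have htail := ih fun i ↦ hf i.succ
    have hsum := summable_mul_of_summable_norm (R := 𝕜) (hf 0).summable.norm htail.summable.norm
    rw [Fin.prod_univ_succ, ← (Fin.consEquiv fun _ ↦ β).hasSum_iff]
    simpa [Function.comp_def, Fin.prod_univ_succ] using (hf 0).mul htail hsum

lemma apply_eq_apply_zero_of_finRotate_invariant {β : Type*} {n : ℕ} {κ : Fin (n + 1) → β}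
    (h : ∀ i, κ (finRotate (n + 1) i) = κ i) (i : Fin (n + 1)) : κ i = κ 0 := by
  induction i using Fin.induction with
  | zero => rfl
  | succ i ih => rw [← ih, ← h i.castSucc, finRotate_apply, Fin.coeSucc_eq_succ]

section Trace

variable {α : Type*} [MeasurableSpace α] {μ : Measure α} {s : Set α} {c : ℕ → ℝ}
  {φ : ℕ → α → ℝ} {K : α → α → ℝ} {C : ℝ} {n : ℕ}

lemma integral_prod_orthonormal_perm [SigmaFinite μ]
    (horth : ∀ j k, ∫ x, φ j x * φ k x ∂μ = if j = k then 1 else 0)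
    (σ : Equiv.Perm (Fin n)) (κ : Fin n → ℕ) :
    ∫ x, ∏ i, c (κ i) * (φ (κ i) (x i) * φ (κ i) (x (σ i))) ∂(Measure.pi fun _ ↦ μ) =
      if ∀ i, κ (σ i) = κ i then ∏ i, c (κ i) else 0 := by
  -- each coordinate `x j` now occurs in a single factor, so the integral splits by Fubini
  have hsplit (x : Fin n → α) : ∏ i, c (κ i) * (φ (κ i) (x i) * φ (κ i) (x (σ i))) =
      (∏ i, c (κ i)) * ∏ j, φ (κ (σ.symm j)) (x j) * φ (κ j) (x j) := by
    rw [Finset.prod_mul_distrib, Finset.prod_mul_distrib, Finset.prod_mul_distrib,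
      ← Equiv.prod_comp σ (fun j ↦ φ (κ j) (x j)),
      ← Equiv.prod_comp σ (fun j ↦ φ (κ (σ.symm j)) (x j))]
    simp only [Equiv.symm_apply_apply]
    ring
  simp_rw [hsplit, integral_const_mul, integral_fintype_prod_eq_prod (𝕜 := ℝ)
    (fun j u ↦ φ (κ (σ.symm j)) u * φ (κ j) u), horth, Finset.prod_boole]
  rw [mul_ite, mul_one, mul_zero]
  congr 1
  simp only [Finset.mem_univ, true_implies]
  exact propext ⟨fun h i ↦ by simpa using (h (σ i)).symm,
    fun h j ↦ by simpa using (h (σ.symm j)).symm⟩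

theorem hasSum_integral_prod_kernel_perm [IsFiniteMeasure μ] (hs : ∀ᵐ x ∂μ, x ∈ s)
    (hK : ∀ x ∈ s, ∀ y ∈ s, HasSum (fun k ↦ c k * (φ k x * φ k y)) (K x y))
    (hc : Summable c) (hφ : ∀ k, Measurable (φ k)) (hφC : ∀ k x, |φ k x| ≤ C)
    (horth : ∀ j k, ∫ x, φ j x * φ k x ∂μ = if j = k then 1 else 0) (σ : Equiv.Perm (Fin n)) :
    HasSum (fun κ : Fin n → ℕ ↦ if ∀ i, κ (σ i) = κ i then ∏ i, c (κ i) else 0)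
      (∫ x, ∏ i, K (x i) (x (σ i)) ∂(Measure.pi fun _ ↦ μ)) := by
  have hbound (κ : Fin n → ℕ) (x : Fin n → α) :
      ‖∏ i, c (κ i) * (φ (κ i) (x i) * φ (κ i) (x (σ i)))‖ ≤ ∏ i, |c (κ i)| * C ^ 2 := by
    rw [norm_prod]
    gcongr with i
    rw [Real.norm_eq_abs, abs_mul, abs_mul, sq]
    have hC : 0 ≤ C := (abs_nonneg _).trans (hφC 0 (x i))
    gcongr <;> apply hφC
  have hmem : ∀ᵐ x ∂(Measure.pi fun _ ↦ μ), ∀ i : Fin n, x i ∈ s :=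
    ae_all_iff.2 fun _ ↦ Measure.tendsto_eval_ae_ae.eventually hs
  have hmeas (κ : Fin n → ℕ) : AEStronglyMeasurable
      (fun x : Fin n → α ↦ ∏ i, c (κ i) * (φ (κ i) (x i) * φ (κ i) (x (σ i))))
      (Measure.pi fun _ ↦ μ) := by
    fun_prop
  have hsumm : ∀ᵐ _ ∂(Measure.pi fun _ : Fin n ↦ μ),
      Summable fun κ : Fin n → ℕ ↦ ∏ i, |c (κ i)| * C ^ 2 := ae_of_all _ fun _ ↦
    (HasSum.fin_prod (f := fun _ k ↦ |c k| * C ^ 2) fun _ ↦ (hc.abs.mul_right _).hasSum).summable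
  have hlim : ∀ᵐ x ∂(Measure.pi fun _ : Fin n ↦ μ), HasSum
      (fun κ : Fin n → ℕ ↦ ∏ i, c (κ i) * (φ (κ i) (x i) * φ (κ i) (x (σ i))))
      (∏ i, K (x i) (x (σ i))) :=
    hmem.mono fun x hx ↦ HasSum.fin_prod (f := fun i k ↦ c k * (φ k (x i) * φ k (x (σ i))))
      fun i ↦ hK _ (hx i) _ (hx (σ i))
  have := hasSum_integral_of_dominated_convergence _ hmeas (fun κ ↦ ae_of_all _ (hbound κ))
    hsumm (integrable_const _) hlim
  simpa only [integral_prod_orthonormal_perm horth] using this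

theorem hasSum_pow_integral_prod_kernel_finRotate [IsFiniteMeasure μ] (hs : ∀ᵐ x ∂μ, x ∈ s)
    (hK : ∀ x ∈ s, ∀ y ∈ s, HasSum (fun k ↦ c k * (φ k x * φ k y)) (K x y))
    (hc : Summable c) (hφ : ∀ k, Measurable (φ k)) (hφC : ∀ k x, |φ k x| ≤ C)
    (horth : ∀ j k, ∫ x, φ j x * φ k x ∂μ = if j = k then 1 else 0) :
    HasSum (fun k ↦ c k ^ (n + 1))
      (∫ x, ∏ i, K (x i) (x (finRotate (n + 1) i)) ∂(Measure.pi fun _ ↦ μ)) := by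
  have hconst : Function.Injective fun k : ℕ ↦ fun _ : Fin (n + 1) ↦ k :=
    fun _ _ h ↦ congr_fun h 0
  have hzero : ∀ κ ∉ range fun k : ℕ ↦ fun _ : Fin (n + 1) ↦ k,
      (if ∀ i, κ (finRotate (n + 1) i) = κ i then ∏ i, c (κ i) else 0) = 0 := by
    intro κ hκ
    refine if_neg fun h ↦ hκ ⟨κ 0, funext fun i ↦ ?_⟩
    exact (apply_eq_apply_zero_of_finRotate_invariant h i).symm
  simpa [Function.comp_def] using
    (hconst.hasSum_iff hzero).2 (hasSum_integral_prod_kernel_perm hs hK hc hφ hφC horth _)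

end Trace

lemma hasSum_one_div_odd_nat_pow {p : ℕ} (hp : 1 < p) :
    HasSum (fun k : ℕ ↦ 1 / ((2 * k + 1 : ℕ) : ℝ) ^ p)
      ((1 - (2 ^ p)⁻¹) * ∑' m : ℕ, 1 / (m : ℝ) ^ p) := by
  have hZ := (Real.summable_one_div_nat_pow.2 hp).hasSum
  have heven : HasSum (fun k : ℕ ↦ 1 / ((2 * k : ℕ) : ℝ) ^ p)
      ((2 ^ p)⁻¹ * ∑' m : ℕ, 1 / (m : ℝ) ^ p) :=
    (hZ.mul_left _).congr_fun fun k ↦ by rw [Nat.cast_mul, mul_pow, one_div, mul_inv]; simp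
  simpa only [sub_mul, one_mul] using hZ.odd_of_even heven

namespace MinKernel

noncomputable def freq (k : ℕ) : ℝ := (2 * k + 1) * π / 2

noncomputable def eigenfun (k : ℕ) (x : ℝ) : ℝ := √2 * sin (freq k * x)

lemma sqrt_two_mul_sin_mul_sqrt_two_mul_sin (a b : ℝ) :
    √2 * sin a * (√2 * sin b) = cos (a - b) - cos (a + b) := by
  rw [cos_sub, cos_add, mul_mul_mul_comm, Real.mul_self_sqrt zero_le_two]
  ring

lemma hasSum_inv_sq_mul_cos {x : ℝ} (hx : x ∈ Icc (0 : ℝ) 1) :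
    HasSum (fun m : ℕ ↦ 1 / (m : ℝ) ^ 2 * cos (2 * π * m * x)) (π ^ 2 * (x ^ 2 - x + 1 / 6)) := by
  have hB : (Polynomial.map (algebraMap ℚ ℝ) (Polynomial.bernoulli 2)).eval x =
      x ^ 2 - x + 1 / 6 := by
    norm_num [Polynomial.bernoulli_def, Finset.sum_range_succ, bernoulli_eq_bernoulli'_of_ne_one,
      bernoulli'_two]
    ring
  have h := hasSum_one_div_nat_pow_mul_cos (k := 1) one_ne_zero hx
  rw [hB, show (-1 : ℝ) ^ (1 + 1) * (2 * π) ^ (2 * 1) / 2 / Nat.factorial (2 * 1) *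
    (x ^ 2 - x + 1 / 6) = π ^ 2 * (x ^ 2 - x + 1 / 6) by
      rw [show Nat.factorial (2 * 1) = 2 from rfl]; push_cast; ring] at h
  exact h.congr_fun fun m ↦ by rw [mul_one]

lemma hasSum_cos_freq_div_sq {t : ℝ} (ht : t ∈ Icc (0 : ℝ) 2) :
    HasSum (fun k ↦ cos (freq k * t) / freq k ^ 2) ((1 - t) / 2) := by
  obtain ⟨ht0, ht2⟩ := ht
  have hall := hasSum_inv_sq_mul_cos (x := t / 4) ⟨by linarith, by linarith⟩
  have heven : HasSum
      (fun k : ℕ ↦ 1 / ((2 * k : ℕ) : ℝ) ^ 2 * cos (2 * π * (2 * k : ℕ) * (t / 4)))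
      (π ^ 2 * ((t / 2) ^ 2 - t / 2 + 1 / 6) / 4) := by
    refine ((hasSum_inv_sq_mul_cos (x := t / 2) ⟨by linarith, by linarith⟩).div_const 4
      ).congr_fun fun k ↦ ?_
    rw [Nat.cast_mul, Nat.cast_two, show 2 * π * (2 * k) * (t / 4) = 2 * π * k * (t / 2) by ring]
    ring
  have hterm (k : ℕ) : cos (freq k * t) / freq k ^ 2 =
      4 / π ^ 2 * (1 / ((2 * k + 1 : ℕ) : ℝ) ^ 2 * cos (2 * π * (2 * k + 1 : ℕ) * (t / 4))) := by
    rw [show 2 * π * ((2 * k + 1 : ℕ) : ℝ) * (t / 4) = freq k * t by push_cast [freq]; ring, freq]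
    push_cast
    field_simp
    ring
  rw [funext hterm, show (1 - t) / 2 = 4 / π ^ 2 * (π ^ 2 * ((t / 4) ^ 2 - t / 4 + 1 / 6) -
    π ^ 2 * ((t / 2) ^ 2 - t / 2 + 1 / 6) / 4) by field_simp; ring]
  exact (hall.odd_of_even heven).mul_left _

lemma hasSum_min {x y : ℝ} (hx : x ∈ Icc (0 : ℝ) 1) (hy : y ∈ Icc (0 : ℝ) 1) :
    HasSum (fun k ↦ (freq k ^ 2)⁻¹ * (eigenfun k x * eigenfun k y)) (min x y) := by
  have hdiff : |y - x| ∈ Icc (0 : ℝ) 2 :=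
    ⟨abs_nonneg _, abs_sub_le_iff.2 ⟨by linarith [hx.1, hy.2], by linarith [hx.2, hy.1]⟩⟩
  have hsum : x + y ∈ Icc (0 : ℝ) 2 := ⟨by linarith [hx.1, hy.1], by linarith [hx.2, hy.2]⟩
  have h := (hasSum_cos_freq_div_sq hdiff).sub (hasSum_cos_freq_div_sq hsum)
  rw [show (1 - |y - x|) / 2 - (1 - (x + y)) / 2 = min x y by
    rw [inf_eq_half_smul_add_sub_abs_sub' ℝ x y, smul_eq_mul]; ring] at h
  refine h.congr_fun fun k ↦ ?_
  have hfreq : 0 ≤ freq k := by unfold freq; positivity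
  rw [eigenfun, eigenfun, sqrt_two_mul_sin_mul_sqrt_two_mul_sin, ← mul_sub, ← mul_add,
    ← abs_of_nonneg hfreq, ← abs_mul, cos_abs, abs_of_nonneg hfreq, mul_sub, ← neg_sub y x,
    mul_neg, cos_neg]
  ring

lemma integral_cos_int_mul_pi (m : ℤ) :
    ∫ x in (0 : ℝ)..1, cos (m * π * x) = if m = 0 then 1 else 0 := by
  split_ifs with hm
  · simp [hm]
  · have hmπ : (m : ℝ) * π ≠ 0 := mul_ne_zero (Int.cast_ne_zero.2 hm) pi_ne_zero
    simp [intervalIntegral.integral_comp_mul_left (fun x ↦ cos x) hmπ, sin_int_mul_pi]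

lemma integral_eigenfun_mul_eigenfun (j k : ℕ) :
    ∫ x in Ioo (0 : ℝ) 1, eigenfun j x * eigenfun k x = if j = k then 1 else 0 := by
  have hprod (x : ℝ) : eigenfun j x * eigenfun k x =
      cos (((j - k : ℤ) : ℝ) * π * x) - cos (((j + k + 1 : ℤ) : ℝ) * π * x) := by
    rw [eigenfun, eigenfun, sqrt_two_mul_sin_mul_sqrt_two_mul_sin, freq, freq]
    push_cast
    ring_nf
  rw [← integral_Ioc_eq_integral_Ioo, ← intervalIntegral.integral_of_le zero_le_one,
    funext hprod, intervalIntegral.integral_sub (Continuous.intervalIntegrable (by fun_prop) _ _)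
      (Continuous.intervalIntegrable (by fun_prop) _ _),
    integral_cos_int_mul_pi, integral_cos_int_mul_pi, if_neg (by omega : (j + k + 1 : ℤ) ≠ 0),
    sub_zero]
  simp only [sub_eq_zero, Int.natCast_inj]

lemma abs_eigenfun_le (k : ℕ) (x : ℝ) : |eigenfun k x| ≤ √2 := by
  rw [eigenfun, abs_mul, abs_of_nonneg (sqrt_nonneg 2)]
  exact mul_le_of_le_one_right (sqrt_nonneg 2) (abs_sin_le_one _)

lemma hasSum_inv_freq_sq_pow {n : ℕ} (hn : n ≠ 0) :
    HasSum (fun k ↦ (freq k ^ 2)⁻¹ ^ n)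
      ((2 / π) ^ (2 * n) * ((1 - (2 ^ (2 * n))⁻¹) * ∑' m : ℕ, 1 / (m : ℝ) ^ (2 * n))) := by
  refine ((hasSum_one_div_odd_nat_pow (p := 2 * n) (by omega)).mul_left _).congr_fun fun k ↦ ?_
  rw [freq, pow_mul, pow_mul, one_div, ← inv_pow, ← inv_pow, ← mul_pow]
  congr 1
  push_cast
  field_simp

theorem integral_prod_min_finRotate (n : ℕ) :
    ∫ x in univ.pi fun _ : Fin (n + 1) ↦ Ioo (0 : ℝ) 1, ∏ i, min (x i) (x (finRotate (n + 1) i)) =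
      (2 / π) ^ (2 * (n + 1)) *
        ((1 - (2 ^ (2 * (n + 1)))⁻¹) * ∑' m : ℕ, 1 / (m : ℝ) ^ (2 * (n + 1))) := by
  have hc : Summable fun k ↦ (freq k ^ 2)⁻¹ := by
    simpa using (hasSum_inv_freq_sq_pow one_ne_zero).summable
  rw [volume_pi, Measure.restrict_pi_pi]
  refine (hasSum_pow_integral_prod_kernel_finRotate (s := Icc 0 1)
    ((ae_restrict_mem measurableSet_Ioo).mono fun _ hx ↦ Ioo_subset_Icc_self hx)
    (fun _ hx _ hy ↦ hasSum_min hx hy) hc (fun k ↦ by unfold eigenfun; fun_prop)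
    abs_eigenfun_le integral_eigenfun_mul_eigenfun).unique
    (hasSum_inv_freq_sq_pow n.succ_ne_zero)

end MinKernel

/-- For every positive integer `n`,
`ζ(2n) = (π^{2n}/(4^n - 1)) ∫_{(0,1)^n} (x₁∧x₂)(x₂∧x₃)⋯(x_n∧x₁) dm(x̄)`,
where the product of minima is taken cyclically. -/
theorem zeta_even_eq_integral_min (n : ℕ) (hn : 0 < n) :
    riemannZeta (2 * n) =
      ((π ^ (2 * n) / (4 ^ n - 1) *
        ∫ x in Set.pi Set.univ fun _ : Fin n => Set.Ioo (0 : ℝ) 1,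
          ∏ i : Fin n, min (x i) (x ⟨(i.val + 1) % n, Nat.mod_lt _ hn⟩) : ℝ) : ℂ) := by
  obtain ⟨n, rfl⟩ := Nat.exists_eq_add_one_of_ne_zero hn.ne'
  have hrot (i : Fin (n + 1)) :
      (⟨(i.val + 1) % (n + 1), Nat.mod_lt _ hn⟩ : Fin (n + 1)) = finRotate (n + 1) i := by
    simp [Fin.ext_iff, Fin.val_add]
  have hζ : riemannZeta (2 * (n + 1 : ℕ)) =
      ((∑' m : ℕ, 1 / (m : ℝ) ^ (2 * (n + 1)) : ℝ) : ℂ) := by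
    rw [← Nat.cast_ofNat, ← Nat.cast_mul, zeta_nat_eq_tsum_of_gt_one (by omega),
      Complex.ofReal_tsum]
    push_cast
    rfl
  simp only [hrot, MinKernel.integral_prod_min_finRotate, hζ]
  congr 1
  have h4 : (4 : ℝ) ^ (n + 1) - 1 ≠ 0 := (sub_pos.2 (one_lt_pow₀ (by norm_num) n.succ_ne_zero)).ne'
  rw [div_pow, pow_mul 2, show (2 : ℝ) ^ 2 = 4 by norm_num]
  field_simp
end

section
/- For σ ∈ S_{2n+1}, define Φ(σ) ∈ {-1,0,1}^{2n} by: in the list 0, σ(1), ..., σ(2n+1), 0, the entry Φ(σ)_j + 1 equals the number of neighbours of j in the list that are greater than j, for j = 1,...,2n. Then Φ(σ) is a Dyck path (all entries ±1, sum 0, nonnegative proper partial sums) if and only if σ is alternating with σ(1) > σ(2). -/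
/-- In the list `0, σ(1), …, σ(n+1), 0` (values written as `1,…,n+1`, i.e. `Fin (n+1)`
elements shifted by one, with boundary entries `0` smaller than every value),
`nbGt σ j` is the number of the two neighbours of the value `j` that are greater
than `j`. -/
def nbGt {n : ℕ} (σ : Equiv.Perm (Fin (n + 1))) (j : Fin (n + 1)) : ℕ :=
  (if h : (σ.symm j).val = 0 then 0
    else if j < σ ⟨(σ.symm j).val - 1, by have := (σ.symm j).isLt; omega⟩ then 1 else 0) +
  (if h : (σ.symm j).val = n then 0
    else if j < σ ⟨(σ.symm j).val + 1, by have := (σ.symm j).isLt; omega⟩ then 1 else 0)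

/-- `Φ(σ) ∈ {-1,0,1}^n` for `σ ∈ S_{n+1}`: the `j`-th entry is `(nbGt σ j) - 1`,
for the values `j = 1, …, n` (i.e. all values except the largest). -/
def PhiList (n : ℕ) (σ : Equiv.Perm (Fin (n + 1))) : List ℤ :=
  List.ofFn fun j : Fin n => (nbGt σ j.castSucc : ℤ) - 1

/-- A permutation (of `{1,…,m}`, written on `Fin m`) is alternating if
`σ(j) < σ(j+1) ↔ σ(j+1) > σ(j+2)` for all valid `j`. -/
def IsAlternating {m : ℕ} (σ : Equiv.Perm (Fin m)) : Prop :=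
  ∀ j : ℕ, ∀ h : j + 2 < m,
    (σ ⟨j, by omega⟩ < σ ⟨j + 1, by omega⟩ ↔ σ ⟨j + 2, h⟩ < σ ⟨j + 1, by omega⟩)

/-- A Dyck path: entries in `{-1,1}`, total sum `0`, proper partial sums nonnegative. -/
def IsDyck (l : List ℤ) : Prop :=
  (∀ x ∈ l, x = -1 ∨ x = 1) ∧ l.sum = 0 ∧
    ∀ k < l.length, 0 ≤ (l.take k).sum

/-!
Counting every pair of adjacent positions at its smaller entry shows that `∑_{j < k} nbGt σ j`
is the number of adjacent pairs with an entry `< k`. Sending each position other than that of the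
maximum to the adjacent pair on its side towards the maximum injects the positions with entries
`< k` into these pairs, so the partial sums of `Φ(σ)` are nonnegative and its total sum is `0`,
for every `σ`. Hence `Φ(σ)` is a Dyck path iff no value has exactly one greater neighbour, i.e. iff
every entry is a peak or a valley. Since the list is bordered by zeros, for odd length this means
exactly that `σ` is alternating and starts with a descent.
-/

open Finset

section

variable {m : ℕ} (σ : Equiv.Perm (Fin (m + 1)))

theorem nbGt_apply (p : Fin (m + 1)) :
    nbGt σ (σ p) =
      Fin.cases 0 (fun i => if σ i.succ < σ i.castSucc then 1 else 0) p +
      Fin.lastCases 0 (fun i => if σ i.castSucc < σ i.succ then 1 else 0) p := by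
  unfold nbGt
  simp only [Equiv.symm_apply_apply]
  congr 1
  · cases p using Fin.cases with
    | zero => simp
    | succ i => simp; rfl
  · cases p using Fin.lastCases with
    | last => simp
    | cast i => simp [i.isLt.ne]; rfl

theorem nbGt_le_two (j : Fin (m + 1)) : nbGt σ j ≤ 2 := by
  unfold nbGt; split_ifs <;> omega

theorem nbGt_last : nbGt σ (Fin.last m) = 0 := by
  simp [nbGt, not_lt.2 (Fin.le_last _)]

theorem nbGt_apply_mk_succ {j : ℕ} (hj : j + 2 < m + 1) :
    nbGt σ (σ ⟨j + 1, by omega⟩) =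
      (if σ ⟨j + 1, by omega⟩ < σ ⟨j, by omega⟩ then 1 else 0) +
        (if σ ⟨j + 1, by omega⟩ < σ ⟨j + 2, hj⟩ then 1 else 0) := by
  simp [nbGt, show j + 1 ≠ m by omega]

theorem nbGt_apply_zero (hm : 0 < m) :
    nbGt σ (σ ⟨0, by omega⟩) = if σ ⟨0, by omega⟩ < σ ⟨1, by omega⟩ then 1 else 0 := by
  simp [nbGt, hm.ne]
  rfl

theorem sum_nbGt_smul {M : Type*} [AddCommMonoid M] (g : Fin (m + 1) → M) :
    ∑ j, nbGt σ j • g j = ∑ i : Fin m, g (min (σ i.castSucc) (σ i.succ)) := by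
  rw [← Equiv.sum_comp σ]
  simp only [nbGt_apply, add_smul, sum_add_distrib]
  rw [Fin.sum_univ_succ, Fin.sum_univ_castSucc]
  simp only [Fin.cases_zero, Fin.cases_succ, Fin.lastCases_last, Fin.lastCases_castSucc,
    zero_smul, zero_add, add_zero, ← sum_add_distrib]
  refine sum_congr rfl fun i _ => ?_
  have hne : σ i.castSucc ≠ σ i.succ := σ.injective.ne Fin.castSucc_lt_succ.ne
  rcases hne.lt_or_gt with h | h
  · simp [h, h.not_gt, min_eq_left h.le]
  · simp [h, h.not_gt, min_eq_right h.le]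

/- Pair `i` joins the positions `i.castSucc` and `i.succ`; `q.succAbove i` is one of its ends, and
these ends run over all positions except the position `q` of the maximum. -/
theorem sum_take_phiList {k : ℕ} (hk : k ≤ m) :
    ((PhiList m σ).take k).sum =
      ∑ i : Fin m, ((if (↑(min (σ i.castSucc) (σ i.succ)) : ℕ) < k then 1 else 0) -
        (if (σ ((σ.symm (Fin.last m)).succAbove i) : ℕ) < k then 1 else 0) : ℤ) := by
  set q := σ.symm (Fin.last m)
  set ind : Fin (m + 1) → ℤ := fun j => if (j : ℕ) < k then 1 else 0
  have hvalues : ((PhiList m σ).take k).sum = ∑ j, (nbGt σ j • ind j - ind j) := by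
    rw [PhiList, List.sum_take_ofFn, sum_filter,
      Fin.sum_univ_castSucc (fun j => nbGt σ j • ind j - ind j)]
    simp only [ind, Fin.val_castSucc, Fin.val_last, hk.not_gt, if_false, smul_zero, sub_zero,
      add_zero]
    refine sum_congr rfl fun j _ => ?_
    split_ifs <;> simp
  have hpositions : ∑ j, ind j = ∑ i : Fin m, ind (σ (q.succAbove i)) := by
    rw [← Equiv.sum_comp σ, Fin.sum_univ_succAbove _ q]
    simp [ind, q, hk.not_gt]
  rw [hvalues, sum_sub_distrib, sum_nbGt_smul, hpositions, ← sum_sub_distrib]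

theorem sum_take_phiList_nonneg {k : ℕ} (hk : k ≤ m) : 0 ≤ ((PhiList m σ).take k).sum := by
  rw [sum_take_phiList σ hk]
  refine sum_nonneg fun i _ => ?_
  set q := σ.symm (Fin.last m)
  have hmin : min (σ i.castSucc) (σ i.succ) ≤ σ (q.succAbove i) := by
    by_cases h : i.castSucc < q
    · rw [Fin.succAbove_of_castSucc_lt _ _ h]; exact min_le_left _ _
    · rw [Fin.succAbove_of_le_castSucc _ _ (not_lt.1 h)]; exact min_le_right _ _
  rw [Fin.le_def] at hmin
  split_ifs <;> omega

theorem sum_phiList_eq_zero : (PhiList m σ).sum = 0 := by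
  have hlength : (PhiList m σ).length = m := List.length_ofFn
  rw [← (PhiList m σ).take_length, hlength, sum_take_phiList σ le_rfl]
  refine sum_eq_zero fun i _ => ?_
  have hne : σ i.castSucc ≠ σ i.succ := σ.injective.ne Fin.castSucc_lt_succ.ne
  have hmin : (σ i.castSucc : ℕ) < m ∨ (σ i.succ : ℕ) < m := by omega
  have hsucc : σ ((σ.symm (Fin.last m)).succAbove i) ≠ Fin.last m := by
    conv_rhs => rw [← σ.apply_symm_apply (Fin.last m)]
    exact σ.injective.ne (Fin.succAbove_ne _ i)
  simp [hmin, Fin.val_lt_last hsucc]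

theorem isDyck_phiList_iff : IsDyck (PhiList m σ) ↔ ∀ j, nbGt σ j ≠ 1 := by
  have hentries : (∀ x ∈ PhiList m σ, x = -1 ∨ x = 1) ↔ ∀ j, nbGt σ j ≠ 1 := by
    rw [Fin.forall_fin_succ', nbGt_last, and_iff_left zero_ne_one]
    simp only [PhiList, List.mem_ofFn, forall_exists_index, forall_apply_eq_imp_iff]
    refine forall_congr' fun j => ?_
    have := nbGt_le_two σ j.castSucc
    omega
  have hlength : (PhiList m σ).length = m := List.length_ofFn
  exact ⟨fun h => hentries.1 h.1, fun h => ⟨hentries.2 h, sum_phiList_eq_zero σ,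
    fun k hk => sum_take_phiList_nonneg σ (by omega)⟩⟩

end

section

variable {m : ℕ} {σ : Equiv.Perm (Fin (m + 1))}

theorem isAlternating_of_nbGt_ne_one (h : ∀ j, nbGt σ j ≠ 1) : IsAlternating σ := by
  intro j hj
  have hmid := h (σ ⟨j + 1, by omega⟩)
  rw [nbGt_apply_mk_succ σ hj] at hmid
  have hne₁ : σ ⟨j, by omega⟩ ≠ σ ⟨j + 1, by omega⟩ := σ.injective.ne (by simp)
  have hne₂ : σ ⟨j + 2, hj⟩ ≠ σ ⟨j + 1, by omega⟩ := σ.injective.ne (by simp)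
  split_ifs at hmid <;> omega

theorem apply_one_lt_apply_zero_of_nbGt_ne_one (hm : 0 < m) (h : ∀ j, nbGt σ j ≠ 1) :
    σ ⟨1, by omega⟩ < σ ⟨0, by omega⟩ := by
  have hzero := h (σ ⟨0, by omega⟩)
  rw [nbGt_apply_zero σ hm] at hzero
  have hne : σ ⟨1, by omega⟩ ≠ σ ⟨0, by omega⟩ := σ.injective.ne (by simp)
  split_ifs at hzero <;> omega

theorem IsAlternating.apply_succ_lt_apply_iff_even (hA : IsAlternating σ) (hm : 0 < m)
    (h0 : σ ⟨1, by omega⟩ < σ ⟨0, by omega⟩) (j : ℕ) (hj : j < m) :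
    σ ⟨j + 1, by omega⟩ < σ ⟨j, by omega⟩ ↔ Even j := by
  induction j with
  | zero => simpa using h0
  | succ j ih =>
    have hne : σ ⟨j, by omega⟩ ≠ σ ⟨j + 1, by omega⟩ := σ.injective.ne (by simp)
    rw [Nat.even_add_one, ← ih (by omega), ← hA j (by omega)]
    omega

theorem IsAlternating.nbGt_ne_one (hA : IsAlternating σ) (hm : 0 < m) (hm_even : Even m)
    (h0 : σ ⟨1, by omega⟩ < σ ⟨0, by omega⟩) (j : Fin (m + 1)) : nbGt σ j ≠ 1 := by
  have hdesc (i : Fin m) : σ i.succ < σ i.castSucc ↔ Even (i : ℕ) :=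
    hA.apply_succ_lt_apply_iff_even hm h0 i i.isLt
  have hleft (p : Fin (m + 1)) :
      Fin.cases 0 (fun i => if σ i.succ < σ i.castSucc then 1 else 0) p =
        if Odd (p : ℕ) then 1 else 0 := by
    cases p using Fin.cases with
    | zero => simp
    | succ i => simp [hdesc, Nat.odd_add_one]
  have hright (p : Fin (m + 1)) :
      Fin.lastCases 0 (fun i => if σ i.castSucc < σ i.succ then 1 else 0) p =
        if Odd (p : ℕ) then 1 else 0 := by
    cases p using Fin.lastCases with
    | last => simp [Nat.not_odd_iff_even.2 hm_even]
    | cast i =>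
      have hne : σ i.castSucc ≠ σ i.succ := σ.injective.ne Fin.castSucc_lt_succ.ne
      have hasc : σ i.castSucc < σ i.succ ↔ ¬ σ i.succ < σ i.castSucc := by omega
      simp [hasc, hdesc]
  rw [← σ.apply_symm_apply j, nbGt_apply, hleft, hright]
  split_ifs <;> norm_num

end

/-- For `σ ∈ S_{2n+1}`, `Φ(σ)` is a Dyck path iff `σ` is alternating with
`σ(1) > σ(2)`. -/
theorem phiList_isDyck_iff (n : ℕ) (hn : 0 < n) (σ : Equiv.Perm (Fin (2 * n + 1))) :
    IsDyck (PhiList (2 * n) σ) ↔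
      (IsAlternating σ ∧ σ ⟨1, by omega⟩ < σ ⟨0, by omega⟩) := by
  rw [isDyck_phiList_iff]
  exact ⟨fun h => ⟨isAlternating_of_nbGt_ne_one h,
      apply_one_lt_apply_zero_of_nbGt_ne_one (by omega) h⟩,
    fun ⟨hA, h0⟩ => hA.nbGt_ne_one (by omega) (even_two_mul n) h0⟩
end
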